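/- arXiv:2008.01680 — 2 statements merged into one kernel-verified Lean document; each statement's English description precedes it below -/
import Mathlib

section
/- Let X and Y be nonempty compact convex subsets of Hausdorff real topological vector spaces, let g : X×Y→ℝ be continuous, and suppose the zero-sum game (X,Y,g) has a saddle point with value w. Let (u0,v0) ∈ ℝ² be outside options admitting a (u0,v0)-feasible contract, i.e., some (x,y) with g(x,y) ≥ u0 and -g(x,y) ≥ v0. Then there exists a (u0,v0)-constrained Nash equilibrium (x̂,ŷ) with g(x̂,ŷ) = median(u0, -v0, w). -/
/-!
If `u0 ≤ w ≤ -v0`, the saddle point itself is a constrained equilibrium. If `w < u0`, follow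
player 1's best-response value `y ↦ max_{x ∈ X} g x y`, which is continuous because `X` is
compact: it is at most `u0` at the saddle strategy `ys` and at least `u0` at the feasible
contract's `y`, so on the connected set `Y` it takes the value `u0` at some `ŷ`. A best response
`x̂` to `ŷ` pays exactly `u0`; player 1 has no profitable deviation, and every profitable
deviation of player 2 pushes player 1 below `u0`. The case `-v0 < w` is the same argument with
the players exchanged.
-/

noncomputable def median3 (a b c : ℝ) : ℝ := max (min a b) (min (max a b) c)

open Set

theorem median3_eq_first {a b c : ℝ} (hca : c ≤ a) (hab : a ≤ b) : median3 a b c = a := by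
  simp [median3, hab, hca, hca.trans hab]

theorem median3_eq_second {a b c : ℝ} (hab : a ≤ b) (hbc : b ≤ c) : median3 a b c = b := by
  simp [median3, hab, hbc]

theorem median3_eq_third {a b c : ℝ} (hac : a ≤ c) (hcb : c ≤ b) : median3 a b c = c := by
  simp [median3, hac, hcb, hac.trans hcb]

section

variable {E F : Type*}

def IsConstrainedNash (X : Set E) (Y : Set F) (U V : E → F → ℝ) (u₀ v₀ : ℝ) (x : E) (y : F) :
    Prop :=
  u₀ ≤ U x y ∧ v₀ ≤ V x y ∧
    (∀ x' ∈ X, U x y < U x' y → V x' y < v₀) ∧ (∀ y' ∈ Y, V x y < V x y' → U x y' < u₀)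

theorem IsConstrainedNash.swap {X : Set E} {Y : Set F} {U V : E → F → ℝ} {u₀ v₀ : ℝ} {x : E}
    {y : F} (h : IsConstrainedNash X Y U V u₀ v₀ x y) :
    IsConstrainedNash Y X (fun y x => V x y) (fun y x => U x y) v₀ u₀ y x :=
  ⟨h.2.1, h.1, h.2.2.2, h.2.2.1⟩

theorem IsCompact.continuousOn_sSup_image [TopologicalSpace E] [TopologicalSpace F] {X : Set E}
    {Y : Set F} {g : E → F → ℝ} (hX : IsCompact X)
    (hg : ContinuousOn (fun p : E × F => g p.1 p.2) (X ×ˢ Y)) :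
    ContinuousOn (fun y => sSup ((fun x => g x y) '' X)) Y := by
  have : CompactSpace X := isCompact_iff_compactSpace.mp hX
  rw [continuousOn_iff_continuous_domRestrict]
  have hgXY : Continuous fun q : Y × X => g q.2 q.1 :=
    hg.comp_continuous (continuous_subtype_val.comp continuous_snd |>.prodMk <|
      continuous_subtype_val.comp continuous_fst) fun q => mk_mem_prod q.2.2 q.1.2
  convert isCompact_univ.continuous_sSup (f := fun (y : Y) (x : X) => g x y) hgXY using 2
  rw [domRestrict_apply, image_univ, image_eq_range]

theorem exists_isMaxOn_eq_of_isPreconnected [TopologicalSpace E] [TopologicalSpace F] {X : Set E}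
    {Y : Set F} {g : E → F → ℝ} (hXne : X.Nonempty) (hX : IsCompact X) (hY : IsPreconnected Y)
    (hg : ContinuousOn (fun p : E × F => g p.1 p.2) (X ×ˢ Y)) {x₁ : E} {y₀ y₁ : F} {u : ℝ}
    (hx₁ : x₁ ∈ X) (hy₀ : y₀ ∈ Y) (hy₁ : y₁ ∈ Y) (h₀ : ∀ x ∈ X, g x y₀ ≤ u)
    (h₁ : u ≤ g x₁ y₁) : ∃ x ∈ X, ∃ y ∈ Y, IsMaxOn (g · y) X x ∧ g x y = u := by
  have hslice : ∀ y ∈ Y, ContinuousOn (g · y) X := fun y hy =>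
    hg.comp (continuous_id.prodMk continuous_const).continuousOn fun x hx => mk_mem_prod hx hy
  have hsup₀ : sSup ((g · y₀) '' X) ≤ u := csSup_le (hXne.image _) (forall_mem_image.2 h₀)
  have hsup₁ : u ≤ sSup ((g · y₁) '' X) :=
    h₁.trans (le_csSup (hX.bddAbove_image (hslice y₁ hy₁)) (mem_image_of_mem _ hx₁))
  obtain ⟨y, hy, hsup⟩ :=
    hY.intermediate_value hy₀ hy₁ (hX.continuousOn_sSup_image hg) ⟨hsup₀, hsup₁⟩
  obtain ⟨x, hx, hsupx, hmax⟩ := hX.exists_sSup_image_eq_and_ge hXne (hslice y hy)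
  exact ⟨x, hx, y, hy, isMaxOn_iff.2 hmax, hsupx.symm.trans hsup⟩

theorem exists_isConstrainedNash_eq_of_forall_le [TopologicalSpace E] [TopologicalSpace F]
    {X : Set E} {Y : Set F} {g : E → F → ℝ} (hXne : X.Nonempty) (hX : IsCompact X)
    (hY : IsPreconnected Y) (hg : ContinuousOn (fun p : E × F => g p.1 p.2) (X ×ˢ Y))
    {y₀ : F} (hy₀ : y₀ ∈ Y) {u₀ v₀ : ℝ} (h₀ : ∀ x ∈ X, g x y₀ ≤ u₀)
    (hfeas : ∃ x ∈ X, ∃ y ∈ Y, u₀ ≤ g x y ∧ v₀ ≤ -g x y) :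
    ∃ x ∈ X, ∃ y ∈ Y, IsConstrainedNash X Y g (fun x y => -g x y) u₀ v₀ x y ∧ g x y = u₀ := by
  obtain ⟨x₁, hx₁, y₁, hy₁, hu₁, hv₁⟩ := hfeas
  obtain ⟨x, hx, y, hy, hmax, rfl⟩ :=
    exists_isMaxOn_eq_of_isPreconnected hXne hX hY hg hx₁ hy₀ hy₁ h₀ hu₁
  refine ⟨x, hx, y, hy, ⟨le_rfl, by linarith, fun x' hx' hlt => ?_, fun y' _ hlt => by linarith⟩,
    rfl⟩
  exact absurd (hmax hx') hlt.not_ge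

theorem exists_isConstrainedNash_eq_neg_of_forall_ge [TopologicalSpace E] [TopologicalSpace F]
    {X : Set E} {Y : Set F} {g : E → F → ℝ} (hYne : Y.Nonempty) (hY : IsCompact Y)
    (hX : IsPreconnected X) (hg : ContinuousOn (fun p : E × F => g p.1 p.2) (X ×ˢ Y))
    {x₀ : E} (hx₀ : x₀ ∈ X) {u₀ v₀ : ℝ} (h₀ : ∀ y ∈ Y, -v₀ ≤ g x₀ y)
    (hfeas : ∃ x ∈ X, ∃ y ∈ Y, u₀ ≤ g x y ∧ v₀ ≤ -g x y) :
    ∃ x ∈ X, ∃ y ∈ Y, IsConstrainedNash X Y g (fun x y => -g x y) u₀ v₀ x y ∧ g x y = -v₀ := by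
  have hg' : ContinuousOn (fun p : F × E => -g p.2 p.1) (Y ×ˢ X) :=
    (hg.comp continuous_swap.continuousOn fun _ hp => ⟨hp.2, hp.1⟩).neg
  have hfeas' : ∃ y ∈ Y, ∃ x ∈ X, v₀ ≤ -g x y ∧ u₀ ≤ -(-g x y) := by
    obtain ⟨x, hx, y, hy, hu, hv⟩ := hfeas
    exact ⟨y, hy, x, hx, hv, by rwa [neg_neg]⟩
  obtain ⟨y, hy, x, hx, hN, hval⟩ :=
    exists_isConstrainedNash_eq_of_forall_le (g := fun y x => -g x y) hYne hY hX hg' hx₀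
      (fun y hy => by linarith [h₀ y hy]) hfeas'
  refine ⟨x, hx, y, hy, ?_, by linarith⟩
  simpa only [neg_neg] using hN.swap

theorem isConstrainedNash_of_isSaddle {X : Set E} {Y : Set F} {g : E → F → ℝ} {xs : E} {ys : F}
    {u₀ v₀ : ℝ} (hsaddle : (∀ x ∈ X, g x ys ≤ g xs ys) ∧ (∀ y ∈ Y, g xs ys ≤ g xs y))
    (hu₀ : u₀ ≤ g xs ys) (hv₀ : g xs ys ≤ -v₀) :
    IsConstrainedNash X Y g (fun x y => -g x y) u₀ v₀ xs ys :=
  ⟨hu₀, by linarith, fun x hx hlt => absurd (hsaddle.1 x hx) hlt.not_ge,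
    fun y hy hlt => absurd (hsaddle.2 y hy) (by linarith)⟩

end

theorem zero_sum_constrained_equilibrium_median_general
    {E F : Type*}
    [AddCommGroup E] [Module ℝ E] [TopologicalSpace E]
    [IsTopologicalAddGroup E] [ContinuousSMul ℝ E]
    [AddCommGroup F] [Module ℝ F] [TopologicalSpace F]
    [IsTopologicalAddGroup F] [ContinuousSMul ℝ F]
    (X : Set E) (Y : Set F) (hXne : X.Nonempty) (hYne : Y.Nonempty)
    (hXcomp : IsCompact X) (hYcomp : IsCompact Y)
    (hXconv : Convex ℝ X) (hYconv : Convex ℝ Y)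
    (g : E → F → ℝ)
    (hg : ContinuousOn (fun p : E × F => g p.1 p.2) (X ×ˢ Y))
    (xs : E) (ys : F) (hxs : xs ∈ X) (hys : ys ∈ Y)
    (hsaddle : (∀ x ∈ X, g x ys ≤ g xs ys) ∧ (∀ y ∈ Y, g xs ys ≤ g xs y))
    (w : ℝ) (hw : g xs ys = w)
    (u0 v0 : ℝ)
    (hfeas : ∃ x ∈ X, ∃ y ∈ Y, u0 ≤ g x y ∧ v0 ≤ -g x y) :
    ∃ xhat ∈ X, ∃ yhat ∈ Y,
      u0 ≤ g xhat yhat ∧ v0 ≤ -g xhat yhat ∧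
      (∀ x ∈ X, g xhat yhat < g x yhat → -g x yhat < v0) ∧
      (∀ y ∈ Y, -g xhat yhat < -g xhat y → g xhat y < u0) ∧
      g xhat yhat = median3 u0 (-v0) w := by
  suffices ∃ xhat ∈ X, ∃ yhat ∈ Y, IsConstrainedNash X Y g (fun x y => -g x y) u0 v0 xhat yhat ∧
      g xhat yhat = median3 u0 (-v0) w by
    obtain ⟨xhat, hxhat, yhat, hyhat, ⟨hu, hv, hdev₁, hdev₂⟩, hval⟩ := this
    exact ⟨xhat, hxhat, yhat, hyhat, hu, hv, hdev₁, hdev₂, hval⟩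
  have huv : u0 ≤ -v0 := by
    obtain ⟨x, -, y, -, hu, hv⟩ := hfeas
    linarith
  subst hw
  rcases le_total (g xs ys) u0 with hwu | hwu
  · rw [median3_eq_first hwu huv]
    exact exists_isConstrainedNash_eq_of_forall_le hXne hXcomp hYconv.isPreconnected hg hys
      (fun x hx => (hsaddle.1 x hx).trans hwu) hfeas
  rcases le_total (-v0) (g xs ys) with hvw | hvw
  · rw [median3_eq_second huv hvw]
    exact exists_isConstrainedNash_eq_neg_of_forall_ge hYne hYcomp hXconv.isPreconnected hg hxs
      (fun y hy => hvw.trans (hsaddle.2 y hy)) hfeas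
  · rw [median3_eq_third hwu hvw]
    exact ⟨xs, hxs, ys, hys, isConstrainedNash_of_isSaddle hsaddle hwu hvw, rfl⟩

/-- In a zero-sum game with a saddle point of value `w`, for any outside options
`(u0,v0)` admitting a feasible contract there is a `(u0,v0)`-constrained Nash
equilibrium whose payoff to player 1 is `median (u0, -v0, w)`. -/
theorem zero_sum_constrained_equilibrium_median
    {E F : Type*}
    [AddCommGroup E] [Module ℝ E] [TopologicalSpace E]
    [IsTopologicalAddGroup E] [ContinuousSMul ℝ E] [T2Space E]
    [AddCommGroup F] [Module ℝ F] [TopologicalSpace F]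
    [IsTopologicalAddGroup F] [ContinuousSMul ℝ F] [T2Space F]
    (X : Set E) (Y : Set F) (hXne : X.Nonempty) (hYne : Y.Nonempty)
    (hXcomp : IsCompact X) (hYcomp : IsCompact Y)
    (hXconv : Convex ℝ X) (hYconv : Convex ℝ Y)
    (g : E → F → ℝ)
    (hg : ContinuousOn (fun p : E × F => g p.1 p.2) (X ×ˢ Y))
    (xs : E) (ys : F) (hxs : xs ∈ X) (hys : ys ∈ Y)
    (hsaddle : (∀ x ∈ X, g x ys ≤ g xs ys) ∧ (∀ y ∈ Y, g xs ys ≤ g xs y))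
    (w : ℝ) (hw : g xs ys = w)
    (u0 v0 : ℝ)
    (hfeas : ∃ x ∈ X, ∃ y ∈ Y, u0 ≤ g x y ∧ v0 ≤ -g x y) :
    ∃ xhat ∈ X, ∃ yhat ∈ Y,
      u0 ≤ g xhat yhat ∧ v0 ≤ -g xhat yhat ∧
      (∀ x ∈ X, g xhat yhat < g x yhat → -g x yhat < v0) ∧
      (∀ y ∈ Y, -g xhat yhat < -g xhat y → g xhat y < u0) ∧
      g xhat yhat = median3 u0 (-v0) w :=
  zero_sum_constrained_equilibrium_median_general X Y hXne hYne hXcomp hYcomp hXconv hYconv g hg xs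
    ys hxs hys hsaddle w hw u0 v0 hfeas
end

section
/- Let m, n ≥ 1 and A : Fin m → Fin n → ℝ be an arbitrary payoff matrix. The mixed extension of the finite two-player zero-sum game with matrix A, namely the zero-sum game (X,Y,g) with X = stdSimplex ℝ (Fin m), Y = stdSimplex ℝ (Fin n) and g(p,q) = Σ_{a,b} p_a q_b A a b, is feasible. -/
/-- A two-player game over strategy sets `X ⊆ E`, `Y ⊆ F` with payoffs `U, V` is
feasible: for every pair of outside options admitting a feasible contract, there
exists a constrained Nash equilibrium. -/
def FeasibleOn {E F : Type*} (X : Set E) (Y : Set F) (U V : E → F → ℝ) : Prop :=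
  ∀ u0 v0 : ℝ, (∃ x ∈ X, ∃ y ∈ Y, u0 ≤ U x y ∧ v0 ≤ V x y) →
    ∃ x' ∈ X, ∃ y' ∈ Y, u0 ≤ U x' y' ∧ v0 ≤ V x' y' ∧
      (∀ x ∈ X, U x' y' < U x y' → V x y' < v0) ∧
      (∀ y ∈ Y, V x' y' < V x' y → U x' y < u0)

/-!
By the Sion–von Neumann minimax theorem the game has a saddle point `(p, q)`; let
`v = g p q`. If `u₀ ≤ v ≤ -v₀`, the saddle point is the equilibrium. If `v < u₀`, move
player 2 along the segment from the feasible contract's `yb` to `q`: player 1's best-response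
value varies continuously from at least `u₀` to at most `v`, so at some `y'` it equals `u₀`,
and a best response `x'` to `y'` is an equilibrium — player 1 cannot gain, and any gain of
player 2 pushes player 1 below `u₀`. The case `v > -v₀` is the same argument with the players
exchanged.
-/
open Set Function AffineMap

def IsConstrainedNashOn {E F : Type*} (X : Set E) (Y : Set F) (U V : E → F → ℝ)
    (u₀ v₀ : ℝ) (x' : E) (y' : F) : Prop :=
  u₀ ≤ U x' y' ∧ v₀ ≤ V x' y' ∧
    (∀ x ∈ X, U x' y' < U x y' → V x y' < v₀) ∧
    (∀ y ∈ Y, V x' y' < V x' y → U x' y < u₀)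

section ZeroSum

variable {E F : Type*} {X : Set E} {Y : Set F} {g : E → F → ℝ} {u₀ v₀ : ℝ}

theorem isConstrainedNashOn_of_isSaddlePointOn {p : E} {q : F} (hp : p ∈ X) (hq : q ∈ Y)
    (hpq : IsSaddlePointOn Y X (fun y x => g x y) q p) (hu : u₀ ≤ g p q)
    (hv : v₀ ≤ -g p q) :
    IsConstrainedNashOn X Y g (fun x y => -g x y) u₀ v₀ p q :=
  ⟨hu, hv, fun x hx hlt => absurd (hpq q hq x hx) hlt.not_ge,
    fun y hy hlt => absurd (hpq y hy p hp) (neg_lt_neg_iff.1 hlt).not_ge⟩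

theorem isConstrainedNashOn_of_isMaxOn_fst {x' : E} {y' : F}
    (hmax : IsMaxOn (g · y') X x') (hval : g x' y' = u₀) (huv : u₀ ≤ -v₀) :
    IsConstrainedNashOn X Y g (fun x y => -g x y) u₀ v₀ x' y' :=
  ⟨hval.ge, by linarith, fun _ hx hlt => absurd (hmax hx) hlt.not_ge,
    fun _ _ hlt => by linarith⟩

theorem isConstrainedNashOn_of_isMaxOn_snd {x' : E} {y' : F}
    (hmax : IsMaxOn (fun y => -g x' y) Y y') (hval : -g x' y' = v₀) (huv : u₀ ≤ -v₀) :
    IsConstrainedNashOn X Y g (fun x y => -g x y) u₀ v₀ x' y' :=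
  ⟨by linarith, hval.ge, fun _ _ hlt => by linarith,
    fun _ hy hlt => absurd (hmax hy) hlt.not_ge⟩

theorem exists_isMaxOn_eq [TopologicalSpace E] [TopologicalSpace F] [AddCommGroup F]
    [Module ℝ F] [IsTopologicalAddGroup F] [ContinuousSMul ℝ F]
    (kX : IsCompact X) (cY : Convex ℝ Y) (hg : Continuous (uncurry g))
    {xb : E} {yb q : F} (hxb : xb ∈ X) (hyb : yb ∈ Y) (hq : q ∈ Y)
    (hqu : ∀ x ∈ X, g x q ≤ u₀) (hu : u₀ ≤ g xb yb) :
    ∃ x' ∈ X, ∃ y' ∈ Y, IsMaxOn (g · y') X x' ∧ g x' y' = u₀ := by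
  set φ : ℝ → ℝ := fun t => sSup ((g · (lineMap yb q t)) '' X)
  have hφ : Continuous φ := kX.continuous_sSup <|
    hg.comp (continuous_snd.prodMk (lineMap_continuous.comp continuous_fst))
  have h0 : u₀ ≤ φ 0 :=
    hu.trans (le_csSup (kX.bddAbove_image (hg.uncurry_right _).continuousOn) ⟨xb, hxb, by simp⟩)
  have h1 : φ 1 ≤ u₀ := by
    refine csSup_le ⟨_, mem_image_of_mem _ hxb⟩ ?_
    rintro _ ⟨x, hx, rfl⟩
    simpa using hqu x hx
  obtain ⟨t, ht, hφt⟩ := intermediate_value_Icc' zero_le_one hφ.continuousOn ⟨h1, h0⟩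
  obtain ⟨x', hx', hsup, hmax⟩ :=
    kX.exists_sSup_image_eq_and_ge ⟨xb, hxb⟩ (hg.uncurry_right _).continuousOn
  exact ⟨x', hx', _, cY.lineMap_mem hyb hq ht, hmax, hsup ▸ hφt⟩

end ZeroSum

section TopologicalVectorSpace

variable {E F : Type*} [TopologicalSpace E] [AddCommGroup E] [Module ℝ E]
  [IsTopologicalAddGroup E] [ContinuousSMul ℝ E] [TopologicalSpace F] [AddCommGroup F]
  [Module ℝ F] [IsTopologicalAddGroup F] [ContinuousSMul ℝ F]
  {X : Set E} {Y : Set F} {g : E → F → ℝ}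

theorem exists_isConstrainedNashOn_of_isSaddlePointOn (cX : Convex ℝ X) (kX : IsCompact X)
    (cY : Convex ℝ Y) (kY : IsCompact Y) (hg : Continuous (uncurry g))
    {p : E} {q : F} (hp : p ∈ X) (hq : q ∈ Y)
    (hpq : IsSaddlePointOn Y X (fun y x => g x y) q p)
    {u₀ v₀ : ℝ} {xb : E} {yb : F} (hxb : xb ∈ X) (hyb : yb ∈ Y)
    (hu : u₀ ≤ g xb yb) (hv : v₀ ≤ -g xb yb) :
    ∃ x' ∈ X, ∃ y' ∈ Y, IsConstrainedNashOn X Y g (fun x y => -g x y) u₀ v₀ x' y' := by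
  rcases lt_or_ge (g p q) u₀ with hlow | hu'
  · obtain ⟨x', hx', y', hy', hmax, hval⟩ :=
      exists_isMaxOn_eq kX cY hg hxb hyb hq (fun x hx => (hpq q hq x hx).trans hlow.le) hu
    exact ⟨x', hx', y', hy', isConstrainedNashOn_of_isMaxOn_fst hmax hval (by linarith)⟩
  rcases lt_or_ge (-v₀) (g p q) with hhigh | hv'
  · obtain ⟨y', hy', x', hx', hmax, hval⟩ :=
      exists_isMaxOn_eq (g := fun y x => -g x y) kY cX (hg.comp continuous_swap).neg
        hyb hxb hp (fun y hy => by linarith [hpq y hy p hp]) hv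
    exact ⟨x', hx', y', hy', isConstrainedNashOn_of_isMaxOn_snd hmax hval (by linarith)⟩
  exact ⟨p, hp, q, hq, isConstrainedNashOn_of_isSaddlePointOn hp hq hpq hu' (by linarith)⟩

theorem feasibleOn_of_quasiconcaveOn_of_quasiconvexOn (cX : Convex ℝ X) (kX : IsCompact X)
    (cY : Convex ℝ Y) (kY : IsCompact Y) (hg : Continuous (uncurry g))
    (hconc : ∀ y ∈ Y, QuasiconcaveOn ℝ X (g · y))
    (hconv : ∀ x ∈ X, QuasiconvexOn ℝ Y (g x)) :
    FeasibleOn X Y g (fun x y => -g x y) := by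
  rintro u₀ v₀ ⟨xb, hxb, yb, hyb, hu, hv⟩
  obtain ⟨q, hq, p, hp, hpq⟩ := Sion.exists_isSaddlePointOn (f := fun y x => g x y)
    ⟨yb, hyb⟩ cY kY (fun x _ => (hg.uncurry_left x).continuousOn.lowerSemicontinuousOn) hconv
    cX ⟨xb, hxb⟩ kX (fun y _ => (hg.uncurry_right y).continuousOn.upperSemicontinuousOn) hconc
  exact exists_isConstrainedNashOn_of_isSaddlePointOn cX kX cY kY hg hp hq hpq hxb hyb hu hv

end TopologicalVectorSpace

theorem matrix_mixed_extension_feasible_general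
    (m n : ℕ) (A : Fin m → Fin n → ℝ) :
    FeasibleOn (stdSimplex ℝ (Fin m)) (stdSimplex ℝ (Fin n))
      (fun p q => ∑ a : Fin m, ∑ b : Fin n, p a * q b * A a b)
      (fun p q => -∑ a : Fin m, ∑ b : Fin n, p a * q b * A a b) := by
  set B : (Fin m → ℝ) →ₗ[ℝ] (Fin n → ℝ) →ₗ[ℝ] ℝ :=
    Matrix.toLinearMap₂' ℝ (Matrix.of A)
  have hB : ∀ p q, ∑ a, ∑ b, p a * q b * A a b = B p q := fun p q => by
    simp [B, Matrix.toLinearMap₂'_apply, mul_assoc]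
  refine feasibleOn_of_quasiconcaveOn_of_quasiconvexOn
    (g := fun p q => ∑ a, ∑ b, p a * q b * A a b)
    (convex_stdSimplex ℝ _) (isCompact_stdSimplex ℝ _) (convex_stdSimplex ℝ _)
    (isCompact_stdSimplex ℝ _) (by fun_prop) (fun q _ => ?_) (fun p _ => ?_)
  · rw [show (fun p => ∑ a, ∑ b, p a * q b * A a b) = B.flip q from funext fun p => hB p q]
    exact ((B.flip q).concaveOn (convex_stdSimplex ℝ _)).quasiconcaveOn
  · rw [show (fun q => ∑ a, ∑ b, p a * q b * A a b) = B p from funext fun q => hB p q]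
    exact ((B p).convexOn (convex_stdSimplex ℝ _)).quasiconvexOn

/-- The mixed extension of any finite two-player zero-sum game is feasible. -/
theorem matrix_mixed_extension_feasible
    (m n : ℕ) (hm : 1 ≤ m) (hn : 1 ≤ n) (A : Fin m → Fin n → ℝ) :
    FeasibleOn (stdSimplex ℝ (Fin m)) (stdSimplex ℝ (Fin n))
      (fun p q => ∑ a : Fin m, ∑ b : Fin n, p a * q b * A a b)
      (fun p q => -∑ a : Fin m, ∑ b : Fin n, p a * q b * A a b) :=
  matrix_mixed_extension_feasible_general m n A
end
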